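/- arXiv:1808.06340 — 2 statements merged into one kernel-verified Lean document; each statement's English description precedes it below -/
import Mathlib

section
/- Let $l \ge 1$ and let $m_1, \dots, m_l$ be real numbers with $m_j \ge 2$ for all $j$, and fix $i \in \{1,\dots,l\}$. Define the symmetric $l \times l$ matrix $B$ by $B_{jk} = -m_j m_k - (m_j - 2\delta_{ij})\delta_{jk}$, i.e. $B = -(m_j m_k)_{jk} - \mathrm{diag}(m_1, \dots, m_{i-1}, m_i - 2, m_{i+1}, \dots, m_l)$. Then $B$ is negative definite: for every nonzero $x \in \mathbb{R}^l$, $x^T B x < 0$. -/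
/-!
Writing `B = -m mᵀ - diag d` with `d j = m j - 2 δ_{ij}`, the form is
`xᵀ B x = -(m ⬝ x)² - ∑ d_j x_j²`. Since `m_j ≥ 2`, every `d_j` is nonnegative and positive
off `i`, so the form can only vanish if `x` is supported on `{i}`; then `m ⬝ x = m_i x_i` with
`m_i ≠ 0` forces `x = 0`.
-/

open Matrix

theorem dotProduct_mulVec_neg_vecMulVec_sub_diagonal {ι : Type*} [Fintype ι] [DecidableEq ι]
    (m d x : ι → ℝ) :
    x ⬝ᵥ (-vecMulVec m m - diagonal d) *ᵥ x = -(m ⬝ᵥ x) ^ 2 - ∑ j, d j * x j ^ 2 := by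
  rw [sub_mulVec, neg_mulVec, vecMulVec_mulVec, dotProduct_sub, dotProduct_neg]
  simp only [op_smul_eq_smul, dotProduct_smul, smul_eq_mul, dotProduct_comm x m, sq]
  congr 1
  exact Finset.sum_congr rfl fun j _ => by rw [mulVec_diagonal]; ring

theorem sq_dotProduct_add_sum_mul_sq_pos {ι : Type*} [Fintype ι] {m d x : ι → ℝ} {i : ι}
    (hd : ∀ j, 0 ≤ d j) (hd_pos : ∀ j ≠ i, 0 < d j) (hmi : m i ≠ 0) (hx : x ≠ 0) :
    0 < (m ⬝ᵥ x) ^ 2 + ∑ j, d j * x j ^ 2 := by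
  have hterm : ∀ j ∈ Finset.univ, 0 ≤ d j * x j ^ 2 := fun j _ => mul_nonneg (hd j) (sq_nonneg _)
  have hsum_nonneg := Finset.sum_nonneg hterm
  refine lt_of_le_of_ne (by positivity) fun h => hx ?_
  have hsum : ∑ j, d j * x j ^ 2 = 0 := by linarith [sq_nonneg (m ⬝ᵥ x)]
  have hoff : ∀ j ≠ i, x j = 0 := fun j hj => by
    have := (Finset.sum_eq_zero_iff_of_nonneg hterm).1 hsum j (Finset.mem_univ j)
    simpa [(hd_pos j hj).ne'] using this
  have hdot : m ⬝ᵥ x = m i * x i :=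
    Finset.sum_eq_single i (fun j _ hj => by simp [hoff j hj]) (by simp)
  have hxi : x i = 0 := by
    have : (m i * x i) ^ 2 = 0 := by rw [← hdot]; linarith [sq_nonneg (m ⬝ᵥ x)]
    simpa [hmi] using this
  funext j
  by_cases hj : j = i
  · subst hj; exact hxi
  · exact hoff j hj

theorem stmt0_general (l : ℕ) (m : Fin l → ℝ) (hm : ∀ j, 2 ≤ m j) (i : Fin l)
    (B : Matrix (Fin l) (Fin l) ℝ)
    (hB : ∀ j k, B j k =
      -(m j * m k) - (if j = k then m j - (if i = j then 2 else 0) else 0)) :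
    ∀ x : Fin l → ℝ, x ≠ 0 → x ⬝ᵥ B.mulVec x < 0 := by
  intro x hx
  set d : Fin l → ℝ := fun j => m j - if i = j then 2 else 0
  have hB_eq : B = -vecMulVec m m - diagonal d := by
    ext j k
    by_cases hjk : j = k <;> simp [hB, vecMulVec_apply, hjk, d]
  have hd : ∀ j, 0 ≤ d j := fun j => by
    have := hm j; simp only [d]; split_ifs <;> linarith
  have hd_pos : ∀ j ≠ i, 0 < d j := fun j hj => by
    have := hm j; simp only [d, if_neg (Ne.symm hj)]; linarith
  have hmi : m i ≠ 0 := by linarith [hm i]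
  rw [hB_eq, dotProduct_mulVec_neg_vecMulVec_sub_diagonal]
  linarith [sq_dotProduct_add_sum_mul_sq_pos hd hd_pos hmi hx]

/-- The matrix `B^i` from the paper is negative definite when all `m_j ≥ 2`. -/
theorem stmt0 (l : ℕ) (hl : 1 ≤ l) (m : Fin l → ℝ) (hm : ∀ j, 2 ≤ m j) (i : Fin l)
    (B : Matrix (Fin l) (Fin l) ℝ)
    (hB : ∀ j k, B j k =
      -(m j * m k) - (if j = k then m j - (if i = j then 2 else 0) else 0)) :
    ∀ x : Fin l → ℝ, x ≠ 0 → x ⬝ᵥ B.mulVec x < 0 :=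
  stmt0_general l m hm i B hB
end

section
/- Let $l \ge 1$, $x \in \mathbb{R}^l$, and $m_1,\dots,m_l \ge 2$ real, with a fixed index $i$. If $-\left(\sum_{j=1}^l m_j x_j\right)^2 - \sum_{j=1}^l (m_j - 2\delta_{ij}) x_j^2 = 0$, then $x = 0$. -/
/-!
Both summands of the form are nonpositive, so both vanish. Every weight `m j - 2 δᵢⱼ` with
`j ≠ i` is at least `2`, so the vanishing of the weighted sum of squares kills `x j` off `i`;
then `∑ m j x j = m i x i = 0` with `m i ≥ 2` kills `x i`.
-/

lemma eq_zero_and_eq_zero_of_neg_sq_sub_eq_zero {R : Type*} [CommRing R] [LinearOrder R]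
    [IsStrictOrderedRing R] {a b : R} (hb : 0 ≤ b) (h : -a ^ 2 - b = 0) : a = 0 ∧ b = 0 := by
  have ha : a ^ 2 = 0 := le_antisymm (by linarith) (sq_nonneg a)
  exact ⟨pow_eq_zero_iff two_ne_zero |>.mp ha, by linarith⟩

lemma eq_zero_of_sum_mul_sq_eq_zero {ι R : Type*} [Fintype ι] [Ring R] [LinearOrder R]
    [IsStrictOrderedRing R] {w x : ι → R} (hw : ∀ j, 0 ≤ w j)
    (h : ∑ j, w j * x j ^ 2 = 0) {j : ι} (hj : 0 < w j) : x j = 0 := by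
  have hterm := (Finset.sum_eq_zero_iff_of_nonneg fun k _ => mul_nonneg (hw k) (sq_nonneg (x k))).mp
    h j (Finset.mem_univ j)
  exact pow_eq_zero_iff two_ne_zero |>.mp ((mul_eq_zero.mp hterm).resolve_left hj.ne')

lemma eq_zero_of_sum_mul_eq_zero_of_forall_ne {ι R : Type*} [Fintype ι] [Semiring R]
    [NoZeroDivisors R] {m x : ι → R} (i : ι) (hmi : m i ≠ 0) (hx : ∀ j ≠ i, x j = 0)
    (h : ∑ j, m j * x j = 0) : x = 0 := by
  rw [Fintype.sum_eq_single i fun j hj => by rw [hx j hj, mul_zero]] at h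
  funext j
  by_cases hj : j = i
  · exact hj ▸ (mul_eq_zero.mp h).resolve_left hmi
  · exact hx j hj

theorem stmt1_general (l : ℕ) (x m : Fin l → ℝ) (hm : ∀ j, 2 ≤ m j) (i : Fin l)
    (h : -(∑ j, m j * x j) ^ 2
        - ∑ j, (m j - 2 * (if i = j then (1 : ℝ) else 0)) * x j ^ 2 = 0) :
    x = 0 := by
  have hw : ∀ j, 0 ≤ m j - 2 * (if i = j then (1 : ℝ) else 0) := fun j => by
    have := hm j
    split_ifs <;> linarith
  obtain ⟨hlin, hsq⟩ := eq_zero_and_eq_zero_of_neg_sq_sub_eq_zero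
    (Finset.sum_nonneg fun j _ => mul_nonneg (hw j) (sq_nonneg (x j))) h
  refine eq_zero_of_sum_mul_eq_zero_of_forall_ne i (by linarith [hm i]) (fun j hj => ?_) hlin
  refine eq_zero_of_sum_mul_sq_eq_zero hw hsq ?_
  rw [if_neg (Ne.symm hj)]
  linarith [hm j]

/-- Equality-case analysis: if the negative definite quadratic form vanishes, `x = 0`. -/
theorem stmt1 (l : ℕ) (hl : 1 ≤ l) (x m : Fin l → ℝ) (hm : ∀ j, 2 ≤ m j) (i : Fin l)
    (h : -(∑ j, m j * x j) ^ 2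
        - ∑ j, (m j - 2 * (if i = j then (1 : ℝ) else 0)) * x j ^ 2 = 0) :
    x = 0 :=
  stmt1_general l x m hm i h
end
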